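/- Let μ and ν be probability measures on a measurable space Θ, let ε ≥ 0, and suppose both μ(O) ≤ e^ε · ν(O) and ν(O) ≤ e^ε · μ(O) for every measurable set O ⊆ Θ. Then for every measurable function f : Θ → ℝ with 0 ≤ f(θ) ≤ b for all θ (where b ≥ 0), one has |∫ f dμ − ∫ f dν| ≤ b·(e^ε − 1). -/

import Mathlib

open MeasureTheory Real

section

variable {Θ : Type*} [MeasurableSpace Θ] {μ ν : Measure Θ}

lemma Measure.le_smul_of_forall_measurableSet_le {c : ENNReal}
    (h : ∀ O : Set Θ, MeasurableSet O → μ O ≤ c * ν O) : μ ≤ c • ν :=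
  Measure.le_iff.2 fun O hO => by simpa using h O hO

lemma integral_le_toReal_mul_integral_of_le_smul {c : ENNReal} (hμν : μ ≤ c • ν) (hc : c ≠ ⊤)
    {f : Θ → ℝ} (hf : 0 ≤ᵐ[ν] f) (hfi : Integrable f ν) :
    ∫ θ, f θ ∂μ ≤ c.toReal * ∫ θ, f θ ∂ν :=
  calc ∫ θ, f θ ∂μ ≤ ∫ θ, f θ ∂(c • ν) :=
        integral_mono_measure hμν (Measure.ae_smul_measure hf c) (hfi.smul_measure hc)
    _ = c.toReal * ∫ θ, f θ ∂ν := integral_smul_measure f c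

/-- `∫ f dμ - ∫ f dν ≤ (c - 1) ∫ f dν ≤ (c - 1) b`. -/
lemma integral_sub_integral_le_of_le_ofReal_smul [IsProbabilityMeasure ν] {c : ℝ} (hc : 1 ≤ c)
    (hμν : μ ≤ ENNReal.ofReal c • ν) {b : ℝ} {f : Θ → ℝ} (hf : Measurable f)
    (hf0 : ∀ θ, 0 ≤ f θ) (hfb : ∀ θ, f θ ≤ b) :
    ∫ θ, f θ ∂μ - ∫ θ, f θ ∂ν ≤ b * (c - 1) := by
  have hfi : Integrable f ν :=
    .of_bound hf.aestronglyMeasurable b <| .of_forall fun θ => by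
      rw [norm_of_nonneg (hf0 θ)]; exact hfb θ
  have hmul : ∫ θ, f θ ∂μ ≤ c * ∫ θ, f θ ∂ν := by
    simpa [ENNReal.toReal_ofReal (zero_le_one.trans hc)] using
      integral_le_toReal_mul_integral_of_le_smul hμν ENNReal.ofReal_ne_top
        (.of_forall hf0) hfi
  have hle : ∫ θ, f θ ∂ν ≤ b := by
    simpa using integral_mono hfi (integrable_const b) hfb
  nlinarith

end

theorem two_sided_dp_implies_expectation_gap_general {Θ : Type*} [MeasurableSpace Θ]
    (μ ν : Measure Θ) [IsProbabilityMeasure μ] [IsProbabilityMeasure ν]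
    (ε : ℝ) (hε : 0 ≤ ε)
    (hdp₁ : ∀ O : Set Θ, MeasurableSet O → μ O ≤ ENNReal.ofReal (exp ε) * ν O)
    (hdp₂ : ∀ O : Set Θ, MeasurableSet O → ν O ≤ ENNReal.ofReal (exp ε) * μ O)
    (b : ℝ) (f : Θ → ℝ) (hf : Measurable f)
    (hf0 : ∀ θ, 0 ≤ f θ) (hfb : ∀ θ, f θ ≤ b) :
    |∫ θ, f θ ∂μ - ∫ θ, f θ ∂ν| ≤ b * (exp ε - 1) := by
  have hexp : 1 ≤ exp ε := one_le_exp hε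
  rw [abs_sub_le_iff]
  exact ⟨integral_sub_integral_le_of_le_ofReal_smul hexp
      (Measure.le_smul_of_forall_measurableSet_le hdp₁) hf hf0 hfb,
    integral_sub_integral_le_of_le_ofReal_smul hexp
      (Measure.le_smul_of_forall_measurableSet_le hdp₂) hf hf0 hfb⟩

/-- If `μ(O) ≤ e^ε · ν(O)` and `ν(O) ≤ e^ε · μ(O)` for every measurable
`O` (two-sided ε-differential privacy between the two output distributions), then for
any measurable `f` with `0 ≤ f ≤ b`, `|∫ f dμ − ∫ f dν| ≤ b · (e^ε − 1)`. -/
theorem two_sided_dp_implies_expectation_gap {Θ : Type*} [MeasurableSpace Θ]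
    (μ ν : Measure Θ) [IsProbabilityMeasure μ] [IsProbabilityMeasure ν]
    (ε : ℝ) (hε : 0 ≤ ε)
    (hdp₁ : ∀ O : Set Θ, MeasurableSet O → μ O ≤ ENNReal.ofReal (exp ε) * ν O)
    (hdp₂ : ∀ O : Set Θ, MeasurableSet O → ν O ≤ ENNReal.ofReal (exp ε) * μ O)
    (b : ℝ) (hb : 0 ≤ b) (f : Θ → ℝ) (hf : Measurable f)
    (hf0 : ∀ θ, 0 ≤ f θ) (hfb : ∀ θ, f θ ≤ b) :
    |∫ θ, f θ ∂μ - ∫ θ, f θ ∂ν| ≤ b * (exp ε - 1) :=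
  two_sided_dp_implies_expectation_gap_general μ ν ε hε hdp₁ hdp₂ b f hf hf0 hfb
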